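/- arXiv:2605.06217 — 2 statements merged into one kernel-verified Lean document; each statement's English description precedes it below -/
import Mathlib

section
/- For all nonnegative integers n and nonzero z, the truncated Jacobi triple product identity holds: (-1/z; q)_{n+1} (-zq; q)_n = \sum_{j=-n-1}^{n} \binom{2n+1}{n-j}_q q^{j(j+1)/2} z^j, where \binom{m}{k}_q denotes the Gaussian binomial coefficient. -/
noncomputable def qPoch (q a : ℂ) (n : ℕ) : ℂ := ∏ i ∈ Finset.range n, (1 - a * q ^ i)

/-- Gaussian binomial coefficient, via the q-Pascal recursion
`[m+1, k+1]_q = [m, k]_q + q^(k+1) * [m, k+1]_q`. -/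
noncomputable def qBinom (q : ℂ) : ℕ → ℕ → ℂ
  | _, 0 => 1
  | 0, _ + 1 => 0
  | m + 1, k + 1 => qBinom q m k + q ^ (k + 1) * qBinom q m (k + 1)

/-! With `t = (q^n z)⁻¹`, the Cauchy q-binomial theorem expands `(-t; q)_{2n+1}` as
`∑ [2n+1, k]_q q^(k choose 2) t^k`. Splitting the product at `i = n`, the upper `n + 1` factors
form `(-1/z; q)_{n+1}`, while the lower `n` factors, read in reverse order, are
`t^n q^(n choose 2) (-zq; q)_n`. Dividing by this monomial completes the square in the exponent:
`k choose 2 - n choose 2 - n (k - n) = (n - k)(n - k + 1)/2`. The division needs `q ≠ 0`; since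
these exponents are nonnegative, both sides are continuous in `q` and the identity extends to
`q = 0`. -/

open Finset

@[simp]
lemma qBinom_zero_right (q : ℂ) (m : ℕ) : qBinom q m 0 = 1 := by
  cases m <;> rfl

lemma qBinom_succ_succ (q : ℂ) (m k : ℕ) :
    qBinom q (m + 1) (k + 1) = qBinom q m k + q ^ (k + 1) * qBinom q m (k + 1) := rfl

lemma qBinom_eq_zero_of_lt (q : ℂ) : ∀ {m k : ℕ}, m < k → qBinom q m k = 0
  | 0, _ + 1, _ => rfl
  | m + 1, k + 1, h => by
    rw [qBinom_succ_succ, qBinom_eq_zero_of_lt q (by omega : m < k),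
      qBinom_eq_zero_of_lt q (by omega : m < k + 1), mul_zero, add_zero]

lemma continuous_qBinom : ∀ m k : ℕ, Continuous fun q => qBinom q m k
  | _, 0 => by simpa using continuous_const
  | 0, _ + 1 => continuous_const
  | m + 1, k + 1 => by
    simp only [qBinom_succ_succ]
    exact (continuous_qBinom m k).add ((continuous_pow _).mul (continuous_qBinom m (k + 1)))

lemma qPoch_add (q a : ℂ) (m n : ℕ) :
    qPoch q a (m + n) = qPoch q a m * qPoch q (a * q ^ m) n := by
  simp only [qPoch, prod_range_add, pow_add, mul_assoc]

noncomputable def qBinomRowSum (q t : ℂ) (m : ℕ) : ℂ :=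
  ∑ k ∈ range (m + 1), qBinom q m k * q ^ k.choose 2 * t ^ k

lemma qBinomRowSum_succ (q t : ℂ) (m : ℕ) :
    qBinomRowSum q t (m + 1) = (1 + t) * qBinomRowSum q (t * q) m := by
  have hrow : qBinomRowSum q (t * q) m =
      ∑ k ∈ range (m + 1), q ^ (k + 1) * qBinom q m (k + 1) * q ^ (k + 1).choose 2 * t ^ (k + 1)
        + 1 := by
    rw [qBinomRowSum, sum_range_succ', sum_range_succ _ m, qBinom_eq_zero_of_lt q m.lt_succ_self]
    simp only [mul_zero, zero_mul, add_zero, qBinom_zero_right, Nat.choose_zero_succ, pow_zero,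
      mul_one]
    refine congrArg (· + 1) (sum_congr rfl fun k _ => ?_)
    rw [Nat.choose_succ_succ, Nat.choose_one_right]
    ring
  have hrow_mul : t * qBinomRowSum q (t * q) m =
      ∑ k ∈ range (m + 1), qBinom q m k * q ^ (k + 1).choose 2 * t ^ (k + 1) := by
    rw [qBinomRowSum, mul_sum]
    refine sum_congr rfl fun k _ => ?_
    rw [Nat.choose_succ_succ, Nat.choose_one_right]
    ring
  rw [qBinomRowSum, sum_range_succ', add_mul, one_mul, hrow_mul, hrow]
  simp only [qBinom_succ_succ, add_mul, sum_add_distrib, qBinom_zero_right, Nat.choose_zero_succ,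
    pow_zero, mul_one]
  ring

lemma qPoch_neg_eq_qBinomRowSum (q t : ℂ) (m : ℕ) : qPoch q (-t) m = qBinomRowSum q t m := by
  induction m generalizing t with
  | zero => simp [qPoch, qBinomRowSum]
  | succ m ih =>
    rw [qBinomRowSum_succ, ← ih, qPoch, prod_range_succ', qPoch]
    have hfactor : ∀ i, 1 - -t * q ^ (i + 1) = 1 - -(t * q) * q ^ i := fun i => by ring
    simp only [hfactor, pow_zero]
    ring

lemma qPoch_neg_inv_eq {q z : ℂ} (hq : q ≠ 0) (hz : z ≠ 0) (n : ℕ) :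
    qPoch q (-(q ^ n * z)⁻¹) n = (q ^ n * z)⁻¹ ^ n * q ^ n.choose 2 * qPoch q (-z * q) n := by
  have hterm : ∀ i ∈ range n, 1 - -(q ^ n * z)⁻¹ * q ^ i =
      (q ^ n * z)⁻¹ * q ^ i * (1 - -z * q * q ^ (n - 1 - i)) := fun i hi => by
    have hpow : q ^ (n - 1 - i) * q * q ^ i = q ^ n := by
      have hi := mem_range.mp hi
      rw [← pow_succ, ← pow_add]
      congr 1
      omega
    field_simp
    linear_combination (-z) * hpow
  rw [qPoch, prod_congr rfl hterm, prod_mul_distrib, prod_mul_distrib, prod_const, card_range,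
    prod_pow_eq_pow_sum, sum_range_id, ← Nat.choose_two_right, qPoch,
    prod_range_reflect (fun i => 1 - -z * q * q ^ i)]

lemma cast_choose_two_eq_add_triangle (n k : ℕ) :
    (k.choose 2 : ℤ) =
      n.choose 2 + n * ((k : ℤ) - n) + ((n : ℤ) - k) * ((n : ℤ) - k + 1) / 2 := by
  have hdvd : (2 : ℤ) ∣ ((n : ℤ) - k) * ((n : ℤ) - k + 1) :=
    (Int.even_mul_succ_self _).two_dvd
  have hk := Nat.cast_choose_two ℚ k
  have hn := Nat.cast_choose_two ℚ n
  qify [hdvd]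
  rw [hk, hn]
  ring

lemma pow_choose_two_mul_inv_pow {q z : ℂ} (hq : q ≠ 0) (hz : z ≠ 0) (n k : ℕ) :
    q ^ k.choose 2 * (q ^ n * z)⁻¹ ^ k = (q ^ n * z)⁻¹ ^ n * q ^ n.choose 2 *
      (q ^ ((((n : ℤ) - k) * ((n : ℤ) - k + 1)) / 2) * z ^ ((n : ℤ) - k)) := by
  have hw : q ^ n * z ≠ 0 := mul_ne_zero (pow_ne_zero _ hq) hz
  have hscale : (q ^ n) ^ ((k : ℤ) - n) * (q ^ n * z) ^ (-(k : ℤ)) =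
      (q ^ n * z) ^ (-(n : ℤ)) * z ^ ((n : ℤ) - k) := by
    rw [show -(k : ℤ) = -n + ((n : ℤ) - k) by ring, zpow_add₀ hw,
      show (k : ℤ) - n = -((n : ℤ) - k) by ring, zpow_neg]
    field_simp
    exact mul_zpow _ _ _
  rw [← zpow_natCast q (k.choose 2), cast_choose_two_eq_add_triangle n k, zpow_add₀ hq,
    zpow_add₀ hq, zpow_mul, zpow_natCast, zpow_natCast, ← zpow_natCast (q ^ n * z)⁻¹,
    ← zpow_natCast (q ^ n * z)⁻¹, inv_zpow', inv_zpow']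
  linear_combination q ^ n.choose 2 * q ^ ((((n : ℤ) - k) * ((n : ℤ) - k + 1)) / 2) * hscale

lemma truncated_JTP_of_ne_zero {q z : ℂ} (hq : q ≠ 0) (hz : z ≠ 0) (n : ℕ) :
    qPoch q (-1 / z) (n + 1) * qPoch q (-z * q) n =
      ∑ k ∈ range (2 * n + 2),
        qBinom q (2 * n + 1) k * q ^ ((((n : ℤ) - k) * ((n : ℤ) - k + 1)) / 2) *
          z ^ ((n : ℤ) - k) := by
  set t := (q ^ n * z)⁻¹
  have hscale : t ^ n * q ^ n.choose 2 ≠ 0 :=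
    mul_ne_zero (pow_ne_zero _ (inv_ne_zero (mul_ne_zero (pow_ne_zero _ hq) hz)))
      (pow_ne_zero _ hq)
  have hupper : -t * q ^ n = -1 / z := by
    simp only [t]
    field_simp
  refine mul_left_cancel₀ hscale ?_
  calc t ^ n * q ^ n.choose 2 * (qPoch q (-1 / z) (n + 1) * qPoch q (-z * q) n)
      = qPoch q (-t) n * qPoch q (-t * q ^ n) (n + 1) := by
        rw [qPoch_neg_inv_eq hq hz, hupper]; ring
    _ = qBinomRowSum q t (2 * n + 1) := by
        rw [← qPoch_add, ← qPoch_neg_eq_qBinomRowSum, two_mul, add_assoc]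
    _ = _ := by
        rw [qBinomRowSum, mul_sum]
        refine sum_congr rfl fun k _ => ?_
        rw [mul_assoc, pow_choose_two_mul_inv_pow hq hz]
        ring

lemma mul_add_one_ediv_two_nonneg (m : ℤ) : 0 ≤ m * (m + 1) / 2 :=
  Int.ediv_nonneg (by rcases le_or_gt 0 m with h | h <;> nlinarith) zero_le_two

theorem truncated_JTP (q z : ℂ) (hz : z ≠ 0) (n : ℕ) :
    qPoch q (-1/z) (n+1) * qPoch q (-z*q) n =
      ∑ k ∈ Finset.range (2*n+2),
        qBinom q (2*n+1) k * q ^ ((((n:ℤ) - k) * ((n:ℤ) - k + 1)) / 2) *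
          z ^ ((n:ℤ) - k) := by
  have hlhs : Continuous fun q => qPoch q (-1/z) (n+1) * qPoch q (-z*q) n := by
    simp only [qPoch]
    fun_prop
  have hrhs : Continuous fun q => ∑ k ∈ Finset.range (2*n+2),
      qBinom q (2*n+1) k * q ^ ((((n:ℤ) - k) * ((n:ℤ) - k + 1)) / 2) * z ^ ((n:ℤ) - k) :=
    continuous_finsetSum _ fun _ _ => ((continuous_qBinom _ _).mul
      (continuous_id.zpow₀ _ fun _ => Or.inr (mul_add_one_ediv_two_nonneg _))).mul
        continuous_const
  exact congrFun (hlhs.ext_on (dense_compl_singleton 0) hrhs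
    fun q hq => truncated_JTP_of_ne_zero hq hz n) q
end

section
/- The pair (\alpha_n, \beta_n) with \alpha_n = z^n q^{n(n+1)/2} for n \in \mathbb{Z} and \beta_n = (-1/z; q)_{n+1} (-zq; q)_n / (q; q)_{2n+1} for n \ge 0 forms an asymmetric bilateral Bailey pair with a = 1 and \lambda = 1; that is, for every n \ge 0, \beta_n = \sum_{k=-n-1}^{n} \alpha_k / ((q;q)_{n-k} (q;q)_{n+k+1}). -/
noncomputable def qPochInf (q a : ℂ) : ℂ := ∏' i : ℕ, (1 - a * q ^ i)

open Finset

@[simp]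
lemma qPoch_zero (q a : ℂ) : qPoch q a 0 = 1 := prod_range_zero _

lemma qPoch_succ (q a : ℂ) (n : ℕ) : qPoch q a (n + 1) = qPoch q a n * (1 - a * q ^ n) :=
  prod_range_succ _ _

lemma qPoch_self_ne_zero {q : ℂ} (hq : ‖q‖ < 1) (m : ℕ) : qPoch q q m ≠ 0 := by
  refine prod_ne_zero_iff.2 fun i _ => sub_ne_zero.2 fun h => ?_
  have : ‖q * q ^ i‖ < 1 := by
    rw [← pow_succ', norm_pow]
    exact pow_lt_one₀ (norm_nonneg q) hq (Nat.succ_ne_zero i)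
  rw [← h, norm_one] at this
  exact this.false

/-- `j (j + 1) / 2`, kept in `ℕ` so that `q ^ triangle j` is a power and not a `zpow` (which
would need `q ≠ 0`). -/
def triangle (j : ℤ) : ℕ := (j * (j + 1) / 2).toNat

lemma natCast_triangle (j : ℤ) : (triangle j : ℤ) = j * (j + 1) / 2 := by
  have hnonneg : 0 ≤ j * (j + 1) := by rcases le_or_gt 0 j with h | h <;> nlinarith
  exact Int.toNat_of_nonneg (Int.ediv_nonneg hnonneg zero_le_two)

lemma two_mul_triangle (j : ℤ) : 2 * (triangle j : ℤ) = j * (j + 1) := by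
  rw [natCast_triangle, Int.mul_ediv_cancel' (Int.even_mul_succ_self j).two_dvd]

lemma triangle_add_one (j : ℤ) : (triangle (j + 1) : ℤ) = triangle j + (j + 1) := by
  linarith [two_mul_triangle j, two_mul_triangle (j + 1)]

noncomputable def baileyAlpha (q z : ℂ) (j : ℤ) : ℂ := z ^ j * q ^ triangle j

lemma baileyAlpha_add_one_mul_pow {q z : ℂ} (hz : z ≠ 0) {j : ℤ} {s m : ℕ} (h : j + 1 + s = m) :
    baileyAlpha q z (j + 1) * q ^ s = z * q ^ m * baileyAlpha q z j := by
  have hexp : triangle (j + 1) + s = m + triangle j := by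
    zify; linarith [triangle_add_one j]
  rw [baileyAlpha, baileyAlpha, zpow_add_one₀ hz, mul_assoc, ← pow_add, hexp, pow_add]
  ring

section Pascal

variable {q : ℂ} (hq : ∀ m, qPoch q q m ≠ 0)
include hq

lemma one_sub_mul_pow_ne_zero (m : ℕ) : 1 - q * q ^ m ≠ 0 := by
  have := hq (m + 1)
  rw [qPoch_succ] at this
  exact right_ne_zero_of_mul this

lemma sum_antidiagonal_succ_div_qPoch_mul (g : ℕ → ℕ → ℂ) (N : ℕ) :
    (∑ p ∈ antidiagonal (N + 1), g p.1 p.2 / (qPoch q q p.1 * qPoch q q p.2)) * (1 - q * q ^ N) =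
      ∑ p ∈ antidiagonal N,
        (g (p.1 + 1) p.2 + q ^ p.1 * g p.1 (p.2 + 1)) / (qPoch q q p.1 * qPoch q q p.2) := by
  have split : ∀ p ∈ antidiagonal (N + 1),
      g p.1 p.2 / (qPoch q q p.1 * qPoch q q p.2) * (1 - q * q ^ N) =
        g p.1 p.2 * (1 - q ^ p.1) / (qPoch q q p.1 * qPoch q q p.2) +
          q ^ p.1 * g p.1 p.2 * (1 - q ^ p.2) / (qPoch q q p.1 * qPoch q q p.2) := by
    intro p hp
    have hpow : q ^ p.1 * q ^ p.2 = q * q ^ N := by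
      rw [← pow_add, mem_antidiagonal.1 hp, pow_succ']
    rw [← add_div, div_mul_eq_mul_div, ← hpow]
    ring
  rw [sum_mul, sum_congr rfl split, sum_add_distrib, Nat.sum_antidiagonal_succ,
    Nat.sum_antidiagonal_succ']
  simp only [pow_zero, sub_self, mul_zero, zero_div, zero_add, ← sum_add_distrib]
  refine sum_congr rfl fun p _ => ?_
  rw [qPoch_succ, qPoch_succ, pow_succ', pow_succ']
  have := one_sub_mul_pow_ne_zero hq p.1
  have := one_sub_mul_pow_ne_zero hq p.2
  field_simp

lemma sum_antidiagonal_succ_div_qPoch_mul' (g : ℕ → ℕ → ℂ) (N : ℕ) :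
    (∑ p ∈ antidiagonal (N + 1), g p.1 p.2 / (qPoch q q p.1 * qPoch q q p.2)) * (1 - q * q ^ N) =
      ∑ p ∈ antidiagonal N,
        (g p.1 (p.2 + 1) + q ^ p.2 * g (p.1 + 1) p.2) / (qPoch q q p.1 * qPoch q q p.2) := by
  have h := sum_antidiagonal_succ_div_qPoch_mul hq (fun r s => g s r) N
  rw [← Nat.sum_antidiagonal_swap] at h
  rw [← Nat.sum_antidiagonal_swap (n := N)] at h
  simp only [Prod.fst_swap, Prod.snd_swap] at h
  convert h using 3 <;> ring

end Pascal

noncomputable def bilateralSum (q z : ℂ) (a b : ℕ) : ℂ :=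
  ∑ p ∈ antidiagonal (a + b), baileyAlpha q z (p.1 - a) / (qPoch q q p.1 * qPoch q q p.2)

section Bilateral

variable {q z : ℂ} (hq : ∀ m, qPoch q q m ≠ 0) (hz : z ≠ 0)
include hq hz

lemma bilateralSum_succ_left (a b : ℕ) :
    bilateralSum q z (a + 1) b * (1 - q * q ^ (a + b)) =
      (1 + z⁻¹ * q ^ a) * bilateralSum q z a b := by
  have h := sum_antidiagonal_succ_div_qPoch_mul hq (fun r _ => baileyAlpha q z (r - (a + 1 : ℕ))) (a + b)
  beta_reduce at h
  rw [bilateralSum, add_right_comm, h, bilateralSum, mul_sum]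
  refine sum_congr rfl fun p hp => ?_
  obtain ⟨j, hj⟩ : ∃ j : ℤ, (p.1 : ℤ) - a = j := ⟨_, rfl⟩
  have h1 : ((p.1 + 1 : ℕ) : ℤ) - (a + 1 : ℕ) = j := by push_cast; omega
  have h2 : (p.1 : ℤ) - (a + 1 : ℕ) = j - 1 := by push_cast; omega
  have hshift := baileyAlpha_add_one_mul_pow (q := q) hz (j := j - 1) (s := a) (m := p.1)
    (by omega)
  rw [sub_add_cancel] at hshift
  rw [h1, h2, hj, mul_div_assoc']
  congr 1
  field_simp
  linear_combination -hshift

lemma bilateralSum_succ_right (a b : ℕ) :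
    bilateralSum q z a (b + 1) * (1 - q * q ^ (a + b)) =
      (1 + z * q ^ (b + 1)) * bilateralSum q z a b := by
  have h := sum_antidiagonal_succ_div_qPoch_mul' hq (fun r _ => baileyAlpha q z (r - a)) (a + b)
  beta_reduce at h
  rw [bilateralSum, ← add_assoc, h, bilateralSum, mul_sum]
  refine sum_congr rfl fun p hp => ?_
  have hshift := baileyAlpha_add_one_mul_pow (q := q) hz (j := p.1 - a) (s := p.2) (m := b + 1)
    (by have := mem_antidiagonal.1 hp; push_cast; linarith)
  have h1 : ((p.1 + 1 : ℕ) : ℤ) - a = p.1 - a + 1 := by push_cast; ring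
  rw [h1, mul_div_assoc']
  congr 1
  linear_combination hshift

theorem bilateralSum_mul_qPoch (a b : ℕ) :
    bilateralSum q z a b * qPoch q q (a + b) = qPoch q (-1 / z) a * qPoch q (-z * q) b := by
  induction b with
  | zero =>
    induction a with
    | zero => simp [bilateralSum, baileyAlpha, triangle]
    | succ a ih =>
      have step := bilateralSum_succ_left hq hz a 0
      simp only [add_zero, qPoch_succ] at step ih ⊢
      linear_combination qPoch q q a * step + (1 + z⁻¹ * q ^ a) * ih
  | succ b ih =>
    rw [← add_assoc, qPoch_succ, qPoch_succ]
    linear_combination qPoch q q (a + b) * bilateralSum_succ_right hq hz a b +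
      (1 + z * q ^ (b + 1)) * ih

end Bilateral

theorem asymmetric_bilateral_Bailey_pair_one (q z : ℂ) (hq : ‖q‖ < 1)
    (hz : z ≠ 0) (n : ℕ) :
    qPoch q (-1/z) (n+1) * qPoch q (-z*q) n / qPoch q q (2*n+1) =
      ∑ k ∈ Finset.range (2*n+2),
        z ^ ((k:ℤ) - ((n:ℤ)+1)) *
          q ^ ((((k:ℤ) - ((n:ℤ)+1)) * ((k:ℤ) - (n:ℤ))) / 2) /
          (qPoch q q (2*n+1-k) * qPoch q q k) := by
  have hq' := qPoch_self_ne_zero hq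
  have hN : n + 1 + n = 2 * n + 1 := by ring
  rw [div_eq_iff (hq' _), ← bilateralSum_mul_qPoch hq' hz, bilateralSum, hN,
    Nat.sum_antidiagonal_eq_sum_range_succ_mk]
  congr 1
  refine sum_congr rfl fun k _ => ?_
  have hexp : ((k : ℤ) - (n + 1 : ℕ)) * ((k : ℤ) - (n + 1 : ℕ) + 1) / 2 =
      ((k : ℤ) - (n + 1)) * (k - n) / 2 := by push_cast; ring_nf
  rw [baileyAlpha, ← zpow_natCast, natCast_triangle, hexp, mul_comm (qPoch q q k)]
  push_cast
  rfl
end
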